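/- Let X have distribution P on a finite alphabet, W = P_{Y|X} a channel, and let X' be the output of the composed channel W̃∘W (where W̃ is the backward channel P_{X|Y}), so that X → Y → X' is a Markov chain with P_{X'|Y} = P_{X|Y}. Then ρ_m(X;X') = ρ_m(X;Y)². -/

import Mathlib

open MeasureTheory ProbabilityTheory Real

noncomputable def maxCorr {Ω α β : Type} [MeasurableSpace Ω] [MeasurableSpace α]
    [MeasurableSpace β] (μ : Measure Ω) (X : Ω → α) (Y : Ω → β) : ℝ :=
  sSup {r : ℝ | ∃ (g : α → ℝ) (f : β → ℝ), Measurable g ∧ Measurable f ∧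
    (∫ ω, g (X ω) ∂μ) = 0 ∧ (∫ ω, f (Y ω) ∂μ) = 0 ∧
    (∫ ω, (g (X ω))^2 ∂μ) = 1 ∧ (∫ ω, (f (Y ω))^2 ∂μ) = 1 ∧
    r = ∫ ω, g (X ω) * f (Y ω) ∂μ}

noncomputable def corr {Ω : Type} [MeasurableSpace Ω] (μ : Measure Ω) (U V : Ω → ℝ) : ℝ :=
  (∫ ω, (U ω - ∫ x, U x ∂μ) * (V ω - ∫ x, V x ∂μ) ∂μ) /
    (Real.sqrt (variance U μ) * Real.sqrt (variance V μ))

/-!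
Write `m_g(y) = E[g(X) | Y = y]` and work in `L²(P_Y)`. Then `E[g(X) f(Y)] = ⟪m_g, f⟫`, and since
`X` and `X'` are conditionally independent given `Y` with the same conditional law,
`E[g(X) h(X')] = ⟪m_g, m_h⟫`. Over standardized `f` the first is maximized by `f = m_g / ‖m_g‖`
(centred because `E[m_g(Y)] = E[g(X)] = 0`), so `ρ_m(X;Y) = sup_g ‖m_g‖`; by Cauchy–Schwarz the
second has supremum `sup_g ‖m_g‖²`, attained at `h = g`.
-/

section InnerProductSpace

variable {E ι κ : Type*} [NormedAddCommGroup E] [InnerProductSpace ℝ E]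

theorem sSup_inner_eq_sSup_norm (G : Set ι) (H : Set κ) (u : ι → E) (v : κ → E)
    (hv : ∀ j ∈ H, ‖v j‖ = 1) (hu : ∀ i ∈ G, u i ≠ 0 → ∃ j ∈ H, v j = ‖u i‖⁻¹ • u i)
    (hbdd : BddAbove ((‖u ·‖) '' G)) :
    sSup {r | ∃ i ∈ G, ∃ j ∈ H, r = inner ℝ (u i) (v j)} = sSup ((‖u ·‖) '' G) := by
  set S := {r | ∃ i ∈ G, ∃ j ∈ H, r = inner ℝ (u i) (v j)}
  have hle : ∀ r ∈ S, r ≤ sSup ((‖u ·‖) '' G) := by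
    rintro r ⟨i, hi, j, hj, rfl⟩
    calc inner ℝ (u i) (v j) ≤ ‖u i‖ * ‖v j‖ := real_inner_le_norm _ _
      _ = ‖u i‖ := by rw [hv j hj, mul_one]
      _ ≤ _ := le_csSup hbdd ⟨i, hi, rfl⟩
  have hnorm_le : ∀ i ∈ G, ‖u i‖ ≤ sSup S := by
    intro i hi
    by_cases hui : u i = 0
    · rcases H.eq_empty_or_nonempty with hH | ⟨j, hj⟩
      · simp [S, hH, hui]
      · rw [hui, norm_zero]
        exact le_csSup ⟨_, hle⟩ ⟨i, hi, j, hj, by simp [hui]⟩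
    · obtain ⟨j, hj, hvj⟩ := hu i hi hui
      refine le_csSup ⟨_, hle⟩ ⟨i, hi, j, hj, ?_⟩
      rw [hvj, real_inner_smul_right, real_inner_self_eq_norm_sq,
        ← div_eq_inv_mul, sq, mul_self_div_self]
  rcases G.eq_empty_or_nonempty with hG | hG
  · simp [S, hG]
  refine le_antisymm (Real.sSup_le hle (Real.sSup_nonneg ?_)) (csSup_le (hG.image _) ?_)
  · rintro _ ⟨i, -, rfl⟩
    exact norm_nonneg _
  · rintro _ ⟨i, hi, rfl⟩
    exact hnorm_le i hi

theorem sSup_inner_self_eq_sq (G : Set ι) (u : ι → E) (hbdd : BddAbove ((‖u ·‖) '' G)) :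
    sSup {r | ∃ i ∈ G, ∃ j ∈ G, r = inner ℝ (u i) (u j)} = sSup ((‖u ·‖) '' G) ^ 2 := by
  set T := {r | ∃ i ∈ G, ∃ j ∈ G, r = inner ℝ (u i) (u j)}
  rcases G.eq_empty_or_nonempty with hG | ⟨i₀, hi₀⟩
  · simp [T, hG]
  set s := sSup ((‖u ·‖) '' G)
  have hnorm_le : ∀ i ∈ G, ‖u i‖ ≤ s := fun i hi => le_csSup hbdd ⟨i, hi, rfl⟩
  have hs : 0 ≤ s := (norm_nonneg _).trans (hnorm_le i₀ hi₀)
  have hle : ∀ r ∈ T, r ≤ s ^ 2 := by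
    rintro r ⟨i, hi, j, hj, rfl⟩
    calc inner ℝ (u i) (u j) ≤ ‖u i‖ * ‖u j‖ := real_inner_le_norm _ _
      _ ≤ s * s := mul_le_mul (hnorm_le i hi) (hnorm_le j hj) (norm_nonneg _) hs
      _ = s ^ 2 := (sq s).symm
  have hsq_mem : ∀ i ∈ G, ‖u i‖ ^ 2 ∈ T := fun i hi =>
    ⟨i, hi, i, hi, (real_inner_self_eq_norm_sq _).symm⟩
  refine le_antisymm (csSup_le ⟨_, hsq_mem i₀ hi₀⟩ hle) ?_
  have hT : 0 ≤ sSup T := (sq_nonneg _).trans (le_csSup ⟨_, hle⟩ (hsq_mem i₀ hi₀))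
  rw [← Real.le_sqrt hs hT]
  refine csSup_le (Set.Nonempty.image _ ⟨i₀, hi₀⟩) ?_
  rintro _ ⟨i, hi, rfl⟩
  exact Real.le_sqrt_of_sq_le (le_csSup ⟨_, hle⟩ (hsq_mem i hi))

end InnerProductSpace

section FiniteValued

variable {Ω α β γ : Type*} [MeasurableSpace Ω] [MeasurableSpace α] [MeasurableSpace β]
  [MeasurableSpace γ] {μ : Measure Ω} [IsFiniteMeasure μ]

theorem integral_comp_eq_sum [Fintype γ] [MeasurableSingletonClass γ] {Z : Ω → γ}
    (hZ : Measurable Z) (φ : γ → ℝ) :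
    ∫ ω, φ (Z ω) ∂μ = ∑ z, μ.real (Z ⁻¹' {z}) * φ z := by
  rw [← integral_map hZ.aemeasurable (measurable_of_countable φ).aestronglyMeasurable,
    integral_fintype .of_finite]
  simp [map_measureReal_apply hZ (measurableSet_singleton _)]

theorem integral_comp_mul_comp_eq_sum [Fintype α] [MeasurableSingletonClass α] [Fintype β]
    [MeasurableSingletonClass β] {X : Ω → α} {Y : Ω → β} (hX : Measurable X) (hY : Measurable Y)
    (g : α → ℝ) (f : β → ℝ) :
    ∫ ω, g (X ω) * f (Y ω) ∂μ = ∑ y, (∑ x, μ.real (X ⁻¹' {x} ∩ Y ⁻¹' {y}) * g x) * f y := by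
  rw [integral_comp_eq_sum (hX.prodMk hY) (fun p => g p.1 * f p.2), Fintype.sum_prod_type,
    Finset.sum_comm]
  simp_rw [← Set.singleton_prod_singleton, Set.mk_preimage_prod, Finset.sum_mul, mul_assoc]

theorem sum_measureReal_preimage_inter [Fintype α] [MeasurableSingletonClass α] {X : Ω → α}
    (hX : Measurable X) (s : Set Ω) :
    ∑ x, μ.real (X ⁻¹' {x} ∩ s) = μ.real s := by
  have h := sum_measureReal_preimage_singleton (μ := μ.restrict s) Finset.univ
    (fun x _ => hX (measurableSet_singleton x))
  simpa [measureReal_restrict_apply (hX (measurableSet_singleton _))] using h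

end FiniteValued

section CondMeanVec

variable {Ω α β : Type*} [MeasurableSpace Ω] [MeasurableSpace α] (μ : Measure Ω)

/-- `L²(P_Y)` is embedded isometrically in `EuclideanSpace ℝ β` by `f ↦ √P_Y · f`;
`condMeanVec μ X Y g` is the image of `y ↦ E[g(X) | Y = y]`. Off the support of `P_Y` both vanish,
`condMeanVec` through the junk value `x / 0 = 0`. -/
noncomputable def lawVec (Y : Ω → β) (f : β → ℝ) : EuclideanSpace ℝ β :=
  WithLp.toLp 2 fun y => √(μ.real (Y ⁻¹' {y})) * f y

noncomputable def condMeanVec [Fintype α] (X : Ω → α) (Y : Ω → β) (g : α → ℝ) :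
    EuclideanSpace ℝ β :=
  WithLp.toLp 2 fun y => (∑ x, μ.real (X ⁻¹' {x} ∩ Y ⁻¹' {y}) * g x) / √(μ.real (Y ⁻¹' {y}))

variable {μ} [IsFiniteMeasure μ] [Fintype α] [MeasurableSingletonClass α] {X : Ω → α} {Y : Ω → β}

theorem condMeanVec_one (hX : Measurable X) : condMeanVec μ X Y 1 = lawVec μ Y 1 := by
  ext y
  simp [condMeanVec, lawVec, sum_measureReal_preimage_inter hX, Real.div_sqrt]

variable [MeasurableSpace β] [Fintype β] [MeasurableSingletonClass β]

theorem norm_lawVec_sq (hY : Measurable Y) (f : β → ℝ) :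
    ‖lawVec μ Y f‖ ^ 2 = ∫ ω, f (Y ω) ^ 2 ∂μ := by
  rw [EuclideanSpace.real_norm_sq_eq, integral_comp_eq_sum hY (f · ^ 2)]
  simp [lawVec, mul_pow]

theorem inner_condMeanVec_lawVec (hX : Measurable X) (hY : Measurable Y) (g : α → ℝ)
    (f : β → ℝ) : inner ℝ (condMeanVec μ X Y g) (lawVec μ Y f) = ∫ ω, g (X ω) * f (Y ω) ∂μ := by
  rw [integral_comp_mul_comp_eq_sum hX hY, PiLp.inner_apply]
  refine Finset.sum_congr rfl fun y _ => ?_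
  simp only [condMeanVec, lawVec, RCLike.inner_apply, conj_trivial]
  rcases eq_or_ne (μ.real (Y ⁻¹' {y})) 0 with hy | hy
  · have : ∑ x, μ.real (X ⁻¹' {x} ∩ Y ⁻¹' {y}) * g x = 0 := Finset.sum_eq_zero fun x _ => by
      rw [measureReal_mono_null Set.inter_subset_right hy, zero_mul]
    simp [hy, this]
  · have : √(μ.real (Y ⁻¹' {y})) ≠ 0 := by positivity
    field_simp

theorem integral_comp_eq_inner (hX : Measurable X) (hY : Measurable Y) (g : α → ℝ) :
    ∫ ω, g (X ω) ∂μ = inner ℝ (condMeanVec μ X Y g) (lawVec μ Y 1) := by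
  simp [inner_condMeanVec_lawVec hX hY]

theorem norm_condMeanVec_sq_le (hX : Measurable X) (hY : Measurable Y) (g : α → ℝ) :
    ‖condMeanVec μ X Y g‖ ^ 2 ≤ ∫ ω, g (X ω) ^ 2 ∂μ := by
  have h := integral_comp_mul_comp_eq_sum (μ := μ) hX hY (g · ^ 2) 1
  simp only [Pi.one_apply, mul_one] at h
  rw [h, EuclideanSpace.real_norm_sq_eq]
  refine Finset.sum_le_sum fun y _ => ?_
  have hCS : (∑ x, μ.real (X ⁻¹' {x} ∩ Y ⁻¹' {y}) * g x) ^ 2 ≤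
      μ.real (Y ⁻¹' {y}) * ∑ x, μ.real (X ⁻¹' {x} ∩ Y ⁻¹' {y}) * g x ^ 2 := by
    rw [← sum_measureReal_preimage_inter hX]
    exact Finset.sum_sq_le_sum_mul_sum_of_sq_le_mul _ (fun _ _ => measureReal_nonneg)
      (fun _ _ => mul_nonneg measureReal_nonneg (sq_nonneg _)) fun _ _ => le_of_eq (by ring)
  rw [condMeanVec, div_pow, Real.sq_sqrt measureReal_nonneg]
  exact div_le_of_le_mul₀ measureReal_nonneg
    (Finset.sum_nonneg fun _ _ => mul_nonneg measureReal_nonneg (sq_nonneg _)) (by linarith)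

end CondMeanVec

theorem CondIndepSet.measureReal_inter_inter_preimage_singleton {Ω β : Type*}
    [MeasurableSpace Ω] [StandardBorelSpace Ω] [MeasurableSpace β] [MeasurableSingletonClass β]
    {μ : Measure Ω} [IsFiniteMeasure μ] {Y : Ω → β} (hY : Measurable Y) {A B : Set Ω}
    (hA : MeasurableSet A) (hB : MeasurableSet B)
    (hAB : CondIndepSet (MeasurableSpace.comap Y inferInstance) hY.comap_le A B μ) (y : β) :
    μ.real (A ∩ B ∩ Y ⁻¹' {y}) =
      μ.real (A ∩ Y ⁻¹' {y}) * μ.real (B ∩ Y ⁻¹' {y}) / μ.real (Y ⁻¹' {y}) := by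
  set C := Y ⁻¹' {y}
  have hC : MeasurableSet[MeasurableSpace.comap Y inferInstance] C :=
    ⟨{y}, measurableSet_singleton y, rfl⟩
  have hcondExp (s : Set Ω) (hs : MeasurableSet s) :
      ∫ ω in C, (μ⟦s | MeasurableSpace.comap Y inferInstance⟧) ω ∂μ = μ.real (s ∩ C) := by
    rw [setIntegral_condExp hY.comap_le ((integrable_const (1 : ℝ)).indicator hs) hC,
      setIntegral_indicator hs, setIntegral_const, smul_eq_mul, mul_one, Set.inter_comm]
  have hatom (φ : β → ℝ) : ∫ ω in C, φ (Y ω) ∂μ = μ.real C * φ y := by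
    rw [setIntegral_congr_fun (hY.comap_le C hC) fun ω (hω : Y ω = y) => congrArg φ hω,
      setIntegral_const, smul_eq_mul]
  -- Doob–Dynkin: conditional expectations given `σ(Y)` factor through `Y`, so they are constant
  -- on the atom `C`.
  obtain ⟨a, -, ha⟩ := (stronglyMeasurable_condExp (f := A.indicator fun _ => (1 : ℝ))
    (m := MeasurableSpace.comap Y inferInstance) (μ := μ)).exists_eq_measurable_comp
  obtain ⟨b, -, hb⟩ := (stronglyMeasurable_condExp (f := B.indicator fun _ => (1 : ℝ))
    (m := MeasurableSpace.comap Y inferInstance) (μ := μ)).exists_eq_measurable_comp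
  have hprod := (condIndepSet_iff _ hY.comap_le A B hA hB μ).1 hAB
  have hABC : μ.real (A ∩ B ∩ C) = μ.real C * (a y * b y) := by
    rw [← hcondExp _ (hA.inter hB), integral_congr_ae (ae_restrict_of_ae hprod), ha, hb]
    exact hatom fun y => a y * b y
  have hAC : μ.real (A ∩ C) = μ.real C * a y := by rw [← hcondExp _ hA, ha]; exact hatom a
  have hBC : μ.real (B ∩ C) = μ.real C * b y := by rw [← hcondExp _ hB, hb]; exact hatom b
  rw [hABC, hAC, hBC, mul_mul_mul_comm, mul_div_right_comm, mul_self_div_self]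

section Markov

variable {Ω α β : Type*} [MeasurableSpace Ω] [StandardBorelSpace Ω] [MeasurableSpace α]
  [Fintype α] [MeasurableSingletonClass α] [MeasurableSpace β] [Fintype β]
  [MeasurableSingletonClass β] {μ : Measure Ω} [IsFiniteMeasure μ] {X X' : Ω → α} {Y : Ω → β}

theorem integral_comp_mul_comp_eq_inner_condMeanVec (hX : Measurable X) (hX' : Measurable X')
    (hY : Measurable Y)
    (hXX' : CondIndepFun (MeasurableSpace.comap Y inferInstance) hY.comap_le X X' μ)
    (g h : α → ℝ) :
    ∫ ω, g (X ω) * h (X' ω) ∂μ = inner ℝ (condMeanVec μ X Y g) (condMeanVec μ X' Y h) := by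
  have hsum := integral_comp_mul_comp_eq_sum (μ := μ) (hX.prodMk hX') hY
    (fun p => g p.1 * h p.2) 1
  simp only [Pi.one_apply, mul_one] at hsum
  rw [hsum, real_inner_comm, PiLp.inner_apply]
  refine Finset.sum_congr rfl fun y _ => ?_
  simp only [condMeanVec, RCLike.inner_apply, conj_trivial, div_mul_div_comm,
    Real.mul_self_sqrt measureReal_nonneg, Finset.sum_mul_sum, Finset.sum_div,
    Fintype.sum_prod_type, ← Set.singleton_prod_singleton, Set.mk_preimage_prod]
  refine Finset.sum_congr rfl fun x _ => Finset.sum_congr rfl fun x' _ => ?_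
  rw [CondIndepSet.measureReal_inter_inter_preimage_singleton hY (hX (measurableSet_singleton x))
    (hX' (measurableSet_singleton x')) ((condIndepFun_iff_condIndepSet_preimage hX hX').1 hXX'
      _ _ (measurableSet_singleton x) (measurableSet_singleton x'))]
  ring

end Markov

section Standardized

variable {Ω α β : Type*} [MeasurableSpace Ω] [MeasurableSpace α] [MeasurableSpace β]

def standardized (μ : Measure Ω) (X : Ω → α) : Set (α → ℝ) :=
  {g | ∫ ω, g (X ω) ∂μ = 0 ∧ ∫ ω, (g (X ω)) ^ 2 ∂μ = 1}

variable [Fintype α] [MeasurableSingletonClass α] [Fintype β] [MeasurableSingletonClass β]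
  {μ : Measure Ω} [IsFiniteMeasure μ] {X : Ω → α} {Y : Ω → β}

theorem norm_lawVec_eq_one (hY : Measurable Y) {f : β → ℝ} (hf : f ∈ standardized μ Y) :
    ‖lawVec μ Y f‖ = 1 :=
  (pow_eq_one_iff_of_nonneg (norm_nonneg _) two_ne_zero).1 ((norm_lawVec_sq hY f).trans hf.2)

theorem norm_condMeanVec_le_one (hX : Measurable X) (hY : Measurable Y) {g : α → ℝ}
    (hg : g ∈ standardized μ X) : ‖condMeanVec μ X Y g‖ ≤ 1 :=
  (pow_le_one_iff_of_nonneg (norm_nonneg _) two_ne_zero).1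
    (hg.2 ▸ norm_condMeanVec_sq_le hX hY g)

theorem exists_lawVec_eq_normalize_condMeanVec (hX : Measurable X) (hY : Measurable Y)
    {g : α → ℝ} (hg : g ∈ standardized μ X) (hu : condMeanVec μ X Y g ≠ 0) :
    ∃ f ∈ standardized μ Y,
      lawVec μ Y f = ‖condMeanVec μ X Y g‖⁻¹ • condMeanVec μ X Y g := by
  set u := condMeanVec μ X Y g
  set f : β → ℝ := fun y => (‖u‖⁻¹ • u) y / √(μ.real (Y ⁻¹' {y}))
  have hf : lawVec μ Y f = ‖u‖⁻¹ • u := by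
    ext y
    rcases eq_or_ne (μ.real (Y ⁻¹' {y})) 0 with hy | hy
    · simp [f, u, lawVec, condMeanVec, hy]
    · have : √(μ.real (Y ⁻¹' {y})) ≠ 0 := by positivity
      simp only [lawVec, f]
      field_simp
  refine ⟨f, ⟨?_, ?_⟩, hf⟩
  · have hmean := inner_condMeanVec_lawVec (μ := μ) hX hY 1 f
    simp only [Pi.one_apply, one_mul] at hmean
    rw [← hmean, condMeanVec_one hX, hf, real_inner_smul_right, real_inner_comm,
      ← integral_comp_eq_inner hX hY, hg.1, mul_zero]
  · rw [← norm_lawVec_sq hY, hf, norm_smul, norm_inv, norm_norm,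
      inv_mul_cancel₀ (norm_ne_zero_iff.2 hu), one_pow]

end Standardized

theorem maxCorr_eq_sSup_standardized {Ω α β : Type} [MeasurableSpace Ω] [MeasurableSpace α]
    [MeasurableSpace β] [Countable α] [MeasurableSingletonClass α] [Countable β]
    [MeasurableSingletonClass β] (μ : Measure Ω) (X : Ω → α) (Y : Ω → β) :
    maxCorr μ X Y = sSup {r | ∃ g ∈ standardized μ X, ∃ f ∈ standardized μ Y,
      r = ∫ ω, g (X ω) * f (Y ω) ∂μ} := by
  unfold maxCorr standardized
  congr 1
  ext r
  constructor
  · rintro ⟨g, f, -, -, hg₀, hf₀, hg₁, hf₁, rfl⟩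
    exact ⟨g, ⟨hg₀, hg₁⟩, f, ⟨hf₀, hf₁⟩, rfl⟩
  · rintro ⟨g, ⟨hg₀, hg₁⟩, f, ⟨hf₀, hf₁⟩, rfl⟩
    exact ⟨g, f, measurable_of_countable g, measurable_of_countable f, hg₀, hf₀, hg₁, hf₁, rfl⟩

theorem stmt3 {Ω α β : Type} [MeasurableSpace Ω] [StandardBorelSpace Ω]
    [MeasurableSpace α] [MeasurableSingletonClass α] [Fintype α]
    [MeasurableSpace β] [MeasurableSingletonClass β] [Fintype β]
    (μ : Measure Ω) [IsProbabilityMeasure μ]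
    (X X' : Ω → α) (Y : Ω → β)
    (hX : Measurable X) (hX' : Measurable X') (hY : Measurable Y)
    (hMarkov : CondIndepFun (MeasurableSpace.comap Y inferInstance) hY.comap_le X X' μ)
    (hBackward : ∀ (x : α) (y : β),
      μ (X' ⁻¹' {x} ∩ Y ⁻¹' {y}) = μ (X ⁻¹' {x} ∩ Y ⁻¹' {y})) :
    maxCorr μ X X' = (maxCorr μ X Y)^2 := by
  have hu : condMeanVec μ X' Y = condMeanVec μ X Y := by
    funext g
    ext y
    simp [condMeanVec, measureReal_def, hBackward]
  have hlaw (φ : α → ℝ) : ∫ ω, φ (X' ω) ∂μ = ∫ ω, φ (X ω) ∂μ := by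
    rw [integral_comp_eq_inner hX' hY, hu, ← integral_comp_eq_inner hX hY]
  have hstd : standardized μ X' = standardized μ X := by
    ext g
    exact and_congr (by rw [hlaw g]) (by rw [hlaw (g · ^ 2)])
  have hbdd : BddAbove ((‖condMeanVec μ X Y ·‖) '' standardized μ X) :=
    ⟨1, by rintro _ ⟨g, hg, rfl⟩; exact norm_condMeanVec_le_one hX hY hg⟩
  rw [maxCorr_eq_sSup_standardized, maxCorr_eq_sSup_standardized, hstd]
  simp_rw [integral_comp_mul_comp_eq_inner_condMeanVec hX hX' hY hMarkov, hu,
    ← inner_condMeanVec_lawVec hX hY]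
  rw [sSup_inner_self_eq_sq _ _ hbdd, sSup_inner_eq_sSup_norm _ _ _ _ ?_
    (fun g hg => exists_lawVec_eq_normalize_condMeanVec hX hY hg) hbdd]
  exact fun f hf => norm_lawVec_eq_one hY hf
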